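/- arXiv:2306.13739 — 7 statements merged into one kernel-verified Lean document; each statement's English description precedes it below -/
import Mathlib

section
/- Let k > k′ > 0 and n ≥ k. There exists a k-local function f : {0,1}^n → ℝ with max_x |f(x)| ≤ 1 such that for every k′-local function g : {0,1}^n → ℝ, max_{x ∈ {0,1}^n} |f(x) − g(x)| ≥ 2^{−k′}. -/
/-!
The parity `χ_T(x) = ∏_{i ∈ T} (-1)^{x_i}` on a set `T` of `k` coordinates is `k`-local and has
absolute value `1`. It is orthogonal to every function of fewer than `k` coordinates, since
flipping a coordinate of `T` outside their support negates `χ_T` and fixes the other function.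
So `χ_T` is orthogonal to every `k'`-local `g`, whence `∑ χ_T (χ_T - g) = 2^n` and some `x` has
`|χ_T x - g x| ≥ 1 ≥ 2^{-k'}`.
-/

open Finset Function

/-- A function `f : {0,1}^n → ℝ` is `k`-local if it is a finite sum of functions
each of which depends on at most `k` of the `n` Boolean input coordinates. -/
def IsKLocal {n : ℕ} (k : ℕ) (f : (Fin n → Bool) → ℝ) : Prop :=
  ∃ (m : ℕ) (g : Fin m → (Fin n → Bool) → ℝ) (S : Fin m → Finset (Fin n)),
    (∀ i, (S i).card ≤ k) ∧
    (∀ i, ∀ x y : Fin n → Bool, (∀ j ∈ S i, x j = y j) → g i x = g i y) ∧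
    (∀ x, f x = ∑ i, g i x)

section Parity

variable {ι : Type*}

def parity (T : Finset ι) (x : ι → Bool) : ℝ :=
  ∏ i ∈ T, if x i then -1 else 1

theorem abs_parity (T : Finset ι) (x : ι → Bool) : |parity T x| = 1 := by
  simp only [parity, abs_prod]
  exact prod_eq_one fun i _ => by cases x i <;> simp

theorem parity_congr (T : Finset ι) {x y : ι → Bool} (h : ∀ i ∈ T, x i = y i) :
    parity T x = parity T y :=
  prod_congr rfl fun i hi => by rw [h i hi]

theorem parity_update_not [DecidableEq ι] {T : Finset ι} {j : ι} (hj : j ∈ T) (x : ι → Bool) :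
    parity T (update x j (!x j)) = -parity T x := by
  have hrest : parity (T.erase j) (update x j (!x j)) = parity (T.erase j) x :=
    parity_congr _ fun i hi => update_of_ne (ne_of_mem_erase hi) _ _
  unfold parity at hrest ⊢
  rw [← mul_prod_erase T _ hj, ← mul_prod_erase T _ hj, hrest, update_self]
  cases x j <;> simp

theorem update_not_involutive [DecidableEq ι] (j : ι) :
    Involutive fun x : ι → Bool => update x j (!x j) := fun x => by
  simp only [update_self, update_idem, Bool.not_not, update_eq_self]

theorem sum_eq_zero_of_update_not_eq_neg [DecidableEq ι] [Fintype ι] (j : ι) {h : (ι → Bool) → ℝ}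
    (H : ∀ x, h (update x j (!x j)) = -h x) : ∑ x, h x = 0 := by
  have hflip : ∑ x, h x = ∑ x, -h x :=
    (Fintype.sum_equiv (update_not_involutive j).toPerm _ _ fun x => (H x).symm).symm
  rw [sum_neg_distrib] at hflip
  linarith

theorem sum_parity_mul_eq_zero [DecidableEq ι] [Fintype ι] {T S : Finset ι} (hTS : ¬T ⊆ S)
    {g : (ι → Bool) → ℝ} (hg : ∀ x y, (∀ j ∈ S, x j = y j) → g x = g y) :
    ∑ x, parity T x * g x = 0 := by
  obtain ⟨j, hjT, hjS⟩ := not_subset.mp hTS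
  refine sum_eq_zero_of_update_not_eq_neg j fun x => ?_
  rw [parity_update_not hjT, hg _ x fun l hl => update_of_ne (ne_of_mem_of_not_mem hl hjS) _ _]
  ring

end Parity

theorem parity_isKLocal {n : ℕ} (T : Finset (Fin n)) : IsKLocal T.card (parity T) :=
  ⟨1, fun _ => parity T, fun _ => T, fun _ => le_rfl, fun _ _ _ => parity_congr T,
    fun x => by simp⟩

theorem sum_parity_mul_eq_zero_of_isKLocal {n k' : ℕ} {T : Finset (Fin n)} (hT : k' < T.card)
    {g : (Fin n → Bool) → ℝ} (hg : IsKLocal k' g) : ∑ x, parity T x * g x = 0 := by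
  obtain ⟨m, g, S, hScard, hSdep, hgsum⟩ := hg
  have hTS : ∀ i, ¬T ⊆ S i := fun i hsub => by
    have := card_le_card hsub
    have := hScard i
    omega
  simp_rw [hgsum, mul_sum]
  rw [sum_comm]
  exact sum_eq_zero fun i _ => sum_parity_mul_eq_zero (hTS i) (hSdep i)

theorem exists_one_le_abs_sub_of_sum_mul_eq_zero {α : Type*} [Fintype α] [Nonempty α]
    {f g : α → ℝ} (hf : ∀ x, |f x| = 1) (horth : ∑ x, f x * g x = 0) :
    ∃ x, 1 ≤ |f x - g x| := by
  by_contra! hlt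
  have hsum : ∑ x, f x * (f x - g x) = Fintype.card α := by
    have hsq : ∀ x, f x * f x = 1 := fun x => by rw [← abs_mul_abs_self, hf, one_mul]
    simp [mul_sub, sum_sub_distrib, horth, hsq]
  have hbound : ∑ x, f x * (f x - g x) < ∑ _x : α, (1 : ℝ) :=
    sum_lt_sum_of_nonempty univ_nonempty fun x _ =>
      calc f x * (f x - g x) ≤ |f x| * |f x - g x| := (le_abs_self _).trans (abs_mul _ _).le
        _ < 1 := by rw [hf, one_mul]; exact hlt x
  simp [hsum] at hbound

theorem stmt1_general {n k k' : ℕ} (hkk' : k' < k) (hn : k ≤ n) :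
    ∃ f : (Fin n → Bool) → ℝ, IsKLocal k f ∧ (∀ x, |f x| ≤ 1) ∧
      ∀ g : (Fin n → Bool) → ℝ, IsKLocal k' g →
        ∃ x, (2 : ℝ) ^ (-(k' : ℤ)) ≤ |f x - g x| := by
  set T : Finset (Fin n) := univ.map (Fin.castLEEmb hn)
  have hTcard : T.card = k := by simp [T]
  refine ⟨parity T, hTcard ▸ parity_isKLocal T, fun x => (abs_parity T x).le, fun g hg => ?_⟩
  have horth := sum_parity_mul_eq_zero_of_isKLocal (hTcard ▸ hkk') hg
  obtain ⟨x, hx⟩ := exists_one_le_abs_sub_of_sum_mul_eq_zero (abs_parity T) horth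
  exact ⟨x, le_trans (zpow_le_one_of_nonpos₀ one_le_two (by omega)) hx⟩

/-- For `k > k′ > 0` and `n ≥ k`, there exists a `k`-local function `f : {0,1}^n → ℝ`
with `max_x |f(x)| ≤ 1` such that every `k′`-local function `g` satisfies
`max_x |f(x) − g(x)| ≥ 2^{−k′}`. -/
theorem stmt1 {n k k' : ℕ} (hk' : 0 < k') (hkk' : k' < k) (hn : k ≤ n) :
    ∃ f : (Fin n → Bool) → ℝ, IsKLocal k f ∧ (∀ x, |f x| ≤ 1) ∧
      ∀ g : (Fin n → Bool) → ℝ, IsKLocal k' g →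
        ∃ x, (2 : ℝ) ^ (-(k' : ℤ)) ≤ |f x - g x| :=
  stmt1_general hkk' hn
end

section
/- Let P, Q be orthogonal projectors on a finite-dimensional Hilbert space, and set f(P,Q) := min over projectors P̃ of ‖PQP − P̃‖ (operator norm). Then ‖[P,Q]‖ = √(f(P,Q) − f(P,Q)²). -/
/-!
Write `A = PQP`, a positive contraction. Its distance to the projectors is
`μ = max_{t ∈ σ(A)} min(t, 1 - t)`: an eigenvector of `A` for `t` shows that every projector is at
least `min(t, 1 - t)` away, and rounding the spectrum to `{0, 1}` by functional calculus gives a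
projector at distance exactly `μ`. On the other hand, with `X = PQ(1 - P)` the commutator is
`X - X*`, where `X` and `X*` act between the orthogonal ranges of `1 - P` and `P`, so
`‖[P, Q]‖² = ‖X‖² = ‖XX*‖ = ‖A - A²‖ = max_{t ∈ σ(A)} t(1 - t) = μ - μ²`.
-/

variable {E : Type*} [NormedAddCommGroup E] [InnerProductSpace ℂ E] [FiniteDimensional ℂ E]

/-- An orthogonal projector: a self-adjoint idempotent operator. -/
def IsOrthoProj (P : E →L[ℂ] E) : Prop := IsSelfAdjoint P ∧ P * P = P

open Set
open scoped InnerProductSpace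

lemma isOrthoProj_iff_isStarProjection {P : E →L[ℂ] E} : IsOrthoProj P ↔ IsStarProjection P :=
  ⟨fun h ↦ ⟨h.2, h.1⟩, fun h ↦ ⟨h.isSelfAdjoint, h.isIdempotentElem⟩⟩

section FiniteDimensional

variable {𝕜 V : Type*} [NontriviallyNormedField 𝕜] [CompleteSpace 𝕜] [NormedAddCommGroup V]
  [NormedSpace 𝕜 V] [FiniteDimensional 𝕜 V]

lemma ContinuousLinearMap.spectrum_toLinearMap (A : V →L[𝕜] V) :
    spectrum 𝕜 (A : V →ₗ[𝕜] V) = spectrum 𝕜 A :=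
  (AlgEquiv.spectrum_eq (Module.End.toContinuousLinearMap V) (A : V →ₗ[𝕜] V)).symm

lemma ContinuousLinearMap.exists_apply_eq_smul_of_mem_spectrum {A : V →L[𝕜] V} {t : 𝕜}
    (ht : t ∈ spectrum 𝕜 A) : ∃ x ≠ 0, A x = t • x := by
  rw [← A.spectrum_toLinearMap] at ht
  obtain ⟨x, hx⟩ := (Module.End.HasEigenvalue.of_mem_spectrum ht).exists_hasEigenvector
  exact ⟨x, hx.2, hx.apply_eq_smul⟩

end FiniteDimensional

lemma ContinuousLinearMap.finite_spectrum_real (A : E →L[ℂ] E) : (spectrum ℝ A).Finite := by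
  rw [← spectrum.preimage_algebraMap ℂ, ← A.spectrum_toLinearMap]
  exact (Module.End.finite_spectrum _).preimage (algebraMap ℝ ℂ).injective.injOn

section InnerProductSpace

variable {𝕜 F : Type*} [RCLike 𝕜] [NormedAddCommGroup F] [InnerProductSpace 𝕜 F]

lemma mul_norm_add_le_norm_smul_add_smul {u v : F} (huv : ⟪u, v⟫_𝕜 = 0) {c d : 𝕜} {m : ℝ}
    (hm : 0 ≤ m) (hc : m ≤ ‖c‖) (hd : m ≤ ‖d‖) : m * ‖u + v‖ ≤ ‖c • u + d • v‖ := by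
  have hcd : ⟪c • u, d • v⟫_𝕜 = 0 := by simp [inner_smul_left, inner_smul_right, huv]
  refine (pow_le_pow_iff_left₀ (by positivity) (norm_nonneg _) two_ne_zero).mp ?_
  rw [sq, sq, norm_add_sq_eq_norm_sq_add_norm_sq_of_inner_eq_zero _ _ hcd, mul_mul_mul_comm,
    norm_add_sq_eq_norm_sq_add_norm_sq_of_inner_eq_zero _ _ huv, norm_smul, norm_smul]
  have hc2 : m * m ≤ ‖c‖ * ‖c‖ := mul_self_le_mul_self hm hc
  have hd2 : m * m ≤ ‖d‖ * ‖d‖ := mul_self_le_mul_self hm hd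
  nlinarith [mul_self_nonneg ‖u‖, mul_self_nonneg ‖v‖]

variable [CompleteSpace F]

lemma IsStarProjection.inner_apply_one_sub_apply {R : F →L[𝕜] F} (hR : IsStarProjection R)
    (x y : F) : ⟪R x, (1 - R) y⟫_𝕜 = 0 := by
  rw [← ContinuousLinearMap.adjoint_inner_right, ← ContinuousLinearMap.star_eq_adjoint,
    hR.isSelfAdjoint.star_eq, ← mul_apply_eq_comp, hR.mul_one_sub_self]
  simp

lemma IsStarProjection.norm_sq_add_norm_sq {R : F →L[𝕜] F} (hR : IsStarProjection R) (x : F) :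
    ‖R x‖ ^ 2 + ‖(1 - R) x‖ ^ 2 = ‖x‖ ^ 2 := by
  have h := @norm_add_sq 𝕜 _ _ _ _ (R x) ((1 - R) x)
  rw [hR.inner_apply_one_sub_apply] at h
  simpa using h.symm

open ContinuousLinearMap in
lemma norm_sub_star_eq_norm {P X : F →L[𝕜] F} (hP : IsStarProjection P) (hPX : P * X = X)
    (hXP : X * P = 0) : ‖X - star X‖ = ‖X‖ := by
  have hXX : X * X = 0 := by nth_rw 2 [← hPX]; rw [← mul_assoc, hXP, zero_mul]
  have hX : X * (1 - P) = X := by rw [mul_sub, mul_one, hXP, sub_zero]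
  have hXs : star X * P = star X := by rw [← hP.isSelfAdjoint.star_eq, ← star_mul, hPX]
  have hsq (x : F) : ‖(X - star X) x‖ ^ 2 = ‖X x‖ ^ 2 + ‖star X x‖ ^ 2 := by
    have horth : ⟪X x, star X x⟫_𝕜 = 0 := by
      rw [star_eq_adjoint, adjoint_inner_right, ← mul_apply_eq_comp, hXX, zero_apply,
        inner_zero_left]
    rw [sub_apply, @norm_sub_sq 𝕜, horth]
    simp
  apply le_antisymm
  · refine opNorm_le_bound _ (norm_nonneg X) fun x ↦ ?_
    have h1 : ‖X x‖ ≤ ‖X‖ * ‖(1 - P) x‖ := calc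
      ‖X x‖ = ‖X ((1 - P) x)‖ := by rw [← mul_apply_eq_comp, hX]
      _ ≤ ‖X‖ * ‖(1 - P) x‖ := X.le_opNorm _
    have h2 : ‖star X x‖ ≤ ‖X‖ * ‖P x‖ := calc
      ‖star X x‖ = ‖star X (P x)‖ := by rw [← mul_apply_eq_comp, hXs]
      _ ≤ ‖star X‖ * ‖P x‖ := (star X).le_opNorm _
      _ = ‖X‖ * ‖P x‖ := by rw [star_eq_adjoint, LinearIsometryEquiv.norm_map]
    refine (pow_le_pow_iff_left₀ (norm_nonneg _) (by positivity) two_ne_zero).mp ?_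
    calc ‖(X - star X) x‖ ^ 2 = ‖X x‖ ^ 2 + ‖star X x‖ ^ 2 := hsq x
      _ ≤ (‖X‖ * ‖(1 - P) x‖) ^ 2 + (‖X‖ * ‖P x‖) ^ 2 := by gcongr
      _ = (‖X‖ * ‖x‖) ^ 2 := by rw [mul_pow, mul_pow, mul_pow, ← hP.norm_sq_add_norm_sq x]; ring
  · refine opNorm_le_bound _ (norm_nonneg _) fun x ↦ ?_
    refine le_trans ?_ ((X - star X).le_opNorm x)
    refine (pow_le_pow_iff_left₀ (norm_nonneg _) (norm_nonneg _) two_ne_zero).mp ?_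
    rw [hsq]
    exact le_add_of_nonneg_right (sq_nonneg _)

lemma IsStarProjection.norm_commutator_sq {P Q : F →L[𝕜] F} (hP : IsStarProjection P)
    (hQ : IsStarProjection Q) :
    ‖P * Q - Q * P‖ ^ 2 = ‖P * Q * P - P * Q * P * (P * Q * P)‖ := by
  have hPP (Z : F →L[𝕜] F) : P * (P * Z) = P * Z := by rw [← mul_assoc, hP.isIdempotentElem.eq]
  have hQQ (Z : F →L[𝕜] F) : Q * (Q * Z) = Q * Z := by rw [← mul_assoc, hQ.isIdempotentElem.eq]
  set X := P * Q * (1 - P) with hX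
  have hstar : star X = (1 - P) * Q * P := by
    simp [X, star_mul, hP.isSelfAdjoint.star_eq, hQ.isSelfAdjoint.star_eq, mul_assoc]
  have hPX : P * X = X := by rw [hX, ← mul_assoc, ← mul_assoc, hP.isIdempotentElem.eq]
  have hXP : X * P = 0 := by rw [hX, mul_assoc, hP.one_sub_mul_self, mul_zero]
  have hXX : X * star X = P * Q * P - P * Q * P * (P * Q * P) := by
    rw [hstar, hX]
    simp only [mul_sub, sub_mul, mul_one, one_mul, mul_assoc, hPP, hQQ]
    abel
  rw [show P * Q - Q * P = X - star X by rw [hstar, hX]; noncomm_ring,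
    norm_sub_star_eq_norm hP hPX hXP, sq, ← CStarRing.norm_self_mul_star, hXX]

lemma IsStarProjection.min_norm_le_norm_sub [FiniteDimensional 𝕜 F] {A R : F →L[𝕜] F}
    (hR : IsStarProjection R) {t : 𝕜} (ht : t ∈ spectrum 𝕜 A) : min ‖t‖ ‖1 - t‖ ≤ ‖A - R‖ := by
  obtain ⟨x, hx, hAx⟩ := A.exists_apply_eq_smul_of_mem_spectrum ht
  refine le_of_mul_le_mul_right ?_ (norm_pos_iff.mpr hx)
  calc min ‖t‖ ‖1 - t‖ * ‖x‖ = min ‖t‖ ‖1 - t‖ * ‖R x + (1 - R) x‖ := by simp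
    _ ≤ ‖(t - 1) • R x + t • (1 - R) x‖ :=
      mul_norm_add_le_norm_smul_add_smul (hR.inner_apply_one_sub_apply x x) (by positivity)
        ((min_le_right _ _).trans (norm_sub_rev _ _).le) (min_le_left _ _)
    _ = ‖(A - R) x‖ := by
      congr 1
      simp only [sub_apply, one_apply_eq_self, hAx]
      module
    _ ≤ ‖A - R‖ * ‖x‖ := (A - R).le_opNorm x

end InnerProductSpace

lemma norm_cfc_eq_of_isMaxOn {𝕜 A : Type*} {p : outParam (A → Prop)} [RCLike 𝕜] [NormedRing A]
    [StarRing A] [NormedAlgebra 𝕜 A] [IsometricContinuousFunctionalCalculus 𝕜 A p]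
    {f : 𝕜 → 𝕜} {a : A} {t : 𝕜} (ht : t ∈ spectrum 𝕜 a)
    (hmax : IsMaxOn (fun s ↦ ‖f s‖) (spectrum 𝕜 a) t)
    (hf : ContinuousOn f (spectrum 𝕜 a) := by cfc_cont_tac) (ha : p a := by cfc_tac) :
    ‖cfc f a‖ = ‖f t‖ :=
  le_antisymm (norm_cfc_le (norm_nonneg _) fun _ hs ↦ hmax hs) (norm_apply_le_norm_cfc f a ht)

lemma mul_one_sub_le_of_min_le {s t : ℝ} (hs : s ∈ Icc 0 1) (ht : t ∈ Icc 0 1)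
    (h : min s (1 - s) ≤ min t (1 - t)) : s * (1 - s) ≤ t * (1 - t) := by
  obtain ⟨hs0, hs1⟩ := hs
  obtain ⟨ht0, ht1⟩ := ht
  rcases min_choice s (1 - s) with hs' | hs' <;> rcases min_choice t (1 - t) with ht' | ht' <;>
    rw [hs', ht'] at h <;> nlinarith [min_le_left s (1 - s), min_le_right s (1 - s),
      min_le_left t (1 - t), min_le_right t (1 - t)]

section CStarAlgebra

variable {A : Type*} [CStarAlgebra A]

lemma IsStarProjection.spectrum_mul_mul_subset_Icc [PartialOrder A] [StarOrderedRing A]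
    {p q : A} (hp : IsStarProjection p) (hq : IsStarProjection q) :
    spectrum ℝ (p * q * p) ⊆ Icc 0 1 := by
  nontriviality A using spectrum.of_subsingleton
  intro t ht
  have hnonneg : 0 ≤ p * q * p := by
    simpa [hp.isSelfAdjoint.star_eq] using star_left_conjugate_nonneg hq.nonneg p
  have hnorm : ‖p * q * p‖ ≤ 1 := calc
    ‖p * q * p‖ ≤ ‖p‖ * ‖q‖ * ‖p‖ := norm_mul₃_le
    _ ≤ 1 := mul_le_one₀ (mul_le_one₀ (hp.norm_le p) (norm_nonneg q) (hq.norm_le q))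
      (norm_nonneg p) (hp.norm_le p)
  exact ⟨spectrum_nonneg_of_nonneg hnonneg ht,
    (Real.le_norm_self t).trans ((spectrum.norm_le_norm_of_mem ht).trans hnorm)⟩

variable {a : A} {t : ℝ}

lemma exists_isStarProjection_norm_sub_eq (hfin : (spectrum ℝ a).Finite)
    (hIcc : spectrum ℝ a ⊆ Icc 0 1) (ht : t ∈ spectrum ℝ a)
    (hmax : IsMaxOn (fun s ↦ min s (1 - s)) (spectrum ℝ a) t)
    (ha : IsSelfAdjoint a := by cfc_tac) :
    ∃ p : A, IsStarProjection p ∧ ‖a - p‖ = min t (1 - t) := by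
  set step : ℝ → ℝ := fun s ↦ if s < 1 / 2 then 0 else 1
  have hcont (f : ℝ → ℝ) : ContinuousOn f (spectrum ℝ a) := hfin.continuousOn f
  have hdist (s : ℝ) (hs : s ∈ Icc 0 1) : ‖s - step s‖ = min s (1 - s) := by
    obtain ⟨hs0, hs1⟩ := hs
    simp only [step, Real.norm_eq_abs]
    split_ifs with h
    · rw [sub_zero, abs_of_nonneg hs0, min_eq_left (by linarith)]
    · rw [abs_of_nonpos (by linarith), min_eq_right (by linarith), neg_sub]
  have hsub : a - cfc step a = cfc (fun s ↦ s - step s) a := by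
    rw [cfc_sub (fun s ↦ s) step a (hcont _) (hcont _), cfc_id' ℝ a]
  refine ⟨cfc step a, ⟨?_, cfc_predicate step a⟩, ?_⟩
  · rw [IsIdempotentElem, ← cfc_mul step step a (hcont _) (hcont _)]
    exact cfc_congr fun s _ ↦ by simp only [step]; split_ifs <;> norm_num
  · rw [hsub, norm_cfc_eq_of_isMaxOn ht ?_ (hcont _), hdist t (hIcc ht)]
    refine isMaxOn_iff.mpr fun s hs ↦ ?_
    rw [hdist s (hIcc hs), hdist t (hIcc ht)]
    exact hmax hs

lemma norm_sub_mul_self_eq (hIcc : spectrum ℝ a ⊆ Icc 0 1) (ht : t ∈ spectrum ℝ a)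
    (hmax : IsMaxOn (fun s ↦ min s (1 - s)) (spectrum ℝ a) t)
    (ha : IsSelfAdjoint a := by cfc_tac) :
    ‖a - a * a‖ = t * (1 - t) := by
  have hcfc : a - a * a = cfc (fun s : ℝ ↦ s - s * s) a := by
    rw [cfc_sub (fun s : ℝ ↦ s) (fun s ↦ s * s) a, cfc_mul (fun s : ℝ ↦ s) (fun s ↦ s) a,
      cfc_id' ℝ a]
  have habs (s : ℝ) (hs : s ∈ Icc 0 1) : ‖s - s * s‖ = s * (1 - s) := by
    rw [Real.norm_eq_abs, abs_of_nonneg (by nlinarith [hs.1, hs.2])]; ring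
  rw [hcfc, norm_cfc_eq_of_isMaxOn ht, habs t (hIcc ht)]
  refine isMaxOn_iff.mpr fun s hs ↦ ?_
  rw [habs s (hIcc hs), habs t (hIcc ht)]
  exact mul_one_sub_le_of_min_le (hIcc hs) (hIcc ht) (hmax hs)

end CStarAlgebra

lemma isLeast_norm_sub_isStarProjection {A : E →L[ℂ] E} (hA : IsSelfAdjoint A)
    (hIcc : spectrum ℝ A ⊆ Icc 0 1) {t : ℝ} (ht : t ∈ spectrum ℝ A)
    (hmax : IsMaxOn (fun s ↦ min s (1 - s)) (spectrum ℝ A) t) :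
    IsLeast {r : ℝ | ∃ R : E →L[ℂ] E, IsStarProjection R ∧ r = ‖A - R‖} (min t (1 - t)) := by
  refine ⟨?_, ?_⟩
  · obtain ⟨R, hR, hnorm⟩ :=
      exists_isStarProjection_norm_sub_eq A.finite_spectrum_real hIcc ht hmax
    exact ⟨R, hR, hnorm.symm⟩
  · rintro r ⟨R, hR, rfl⟩
    calc min t (1 - t) ≤ min ‖(t : ℂ)‖ ‖1 - (t : ℂ)‖ := by
          rw [Complex.norm_real, ← Complex.ofReal_one, ← Complex.ofReal_sub, Complex.norm_real]
          exact min_le_min (Real.le_norm_self t) (Real.le_norm_self _)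
      _ ≤ ‖A - R‖ := hR.min_norm_le_norm_sub (spectrum.algebraMap_mem ℂ ht)

/-- For orthogonal projectors `P, Q` on a finite-dimensional Hilbert space, with
`f(P,Q) := min_{P̃ projector} ‖PQP − P̃‖`, one has `‖[P,Q]‖ = √(f(P,Q) − f(P,Q)²)`. -/
theorem stmt3 (P Q : E →L[ℂ] E) (hP : IsOrthoProj P) (hQ : IsOrthoProj Q) :
    ‖P * Q - Q * P‖ =
      Real.sqrt (sInf {r : ℝ | ∃ R : E →L[ℂ] E, IsOrthoProj R ∧ r = ‖P * Q * P - R‖} -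
        (sInf {r : ℝ | ∃ R : E →L[ℂ] E, IsOrthoProj R ∧ r = ‖P * Q * P - R‖}) ^ 2) := by
  simp only [isOrthoProj_iff_isStarProjection] at hP hQ ⊢
  rcases subsingleton_or_nontrivial E with hE | hE
  · simp [Subsingleton.elim _ (0 : E →L[ℂ] E)]
  have hA : IsSelfAdjoint (P * Q * P) := by
    simpa [hP.isSelfAdjoint.star_eq] using hQ.isSelfAdjoint.conjugate P
  have hIcc := hP.spectrum_mul_mul_subset_Icc hQ
  obtain ⟨t, ht, hmax⟩ := Set.exists_max_image _ (fun s ↦ min s (1 - s))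
    (P * Q * P).finite_spectrum_real (ContinuousFunctionalCalculus.spectrum_nonempty _ hA)
  replace hmax := isMaxOn_iff.mpr hmax
  rw [(isLeast_norm_sub_isStarProjection hA hIcc ht hmax).csInf_eq,
    ← Real.sqrt_sq (norm_nonneg (P * Q - Q * P)), hP.norm_commutator_sq hQ,
    norm_sub_mul_self_eq hIcc ht hmax]
  congr 1
  rcases min_choice t (1 - t) with h | h <;> rw [h] <;> ring
end

section
/- For any linear operators A, B on a finite-dimensional space and t ∈ ℝ, e^{tA} e^{tB} − e^{t(A+B)} = ∫₀ᵗ e^{(t−τ)(A+B)} e^{τA} (B − e^{−τA} B e^{τA}) e^{τB} dτ. -/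
/-!
Duhamel's formula `V t - e^{tC} V 0 = ∫₀ᵗ e^{(t-τ)C} (V' τ - C V τ) dτ`, applied to
`V τ = e^{τA} e^{τB}` and `C = A + B`: the defect `V' - C V = e^{τA} B e^{τB} - B e^{τA} e^{τB}`
equals `e^{τA} (B - e^{-τA} B e^{τA}) e^{τB}` because `e^{τA} e^{-τA} = 1`.
-/

open NormedSpace

section BanachAlgebra

variable {𝔸 : Type*} [NormedRing 𝔸] [NormedAlgebra ℝ 𝔸] [CompleteSpace 𝔸]

theorem NormedSpace.exp_mul_exp_neg (x : 𝔸) : exp x * exp (-x) = 1 := by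
  let +nondep : NormedAlgebra ℚ 𝔸 := .restrictScalars ℚ ℝ 𝔸
  rw [← exp_add_of_commute (Commute.refl x).neg_right, add_neg_cancel, exp_zero]

theorem hasDerivAt_exp_sub_smul_const (C : 𝔸) (t τ : ℝ) :
    HasDerivAt (fun σ : ℝ => exp ((t - σ) • C)) (-(exp ((t - τ) • C) * C)) τ :=
  ((hasDerivAt_exp_smul_const C (t - τ)).scomp τ
    ((hasDerivAt_id τ).const_sub t)).congr_deriv (neg_one_smul ℝ _)

theorem sub_exp_smul_mul_eq_integral (C : 𝔸) {V V' : ℝ → 𝔸}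
    (hV : ∀ τ, HasDerivAt V (V' τ) τ) (hV' : Continuous V') (t : ℝ) :
    V t - exp (t • C) * V 0 = ∫ τ in (0 : ℝ)..t, exp ((t - τ) • C) * (V' τ - C * V τ) := by
  have hF : ∀ τ, HasDerivAt (fun σ => exp ((t - σ) • C) * V σ)
      (exp ((t - τ) • C) * (V' τ - C * V τ)) τ := fun τ => by
    refine ((hasDerivAt_exp_sub_smul_const C t τ).mul (hV τ)).congr_deriv ?_
    rw [mul_sub, neg_mul, mul_assoc]
    abel
  have hcont : Continuous fun τ => exp ((t - τ) • C) * (V' τ - C * V τ) :=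
    continuous_iff_continuousAt.2 fun τ =>
      (hasDerivAt_exp_sub_smul_const C t τ).continuousAt.mul
        (hV'.continuousAt.sub (continuousAt_const.mul (hV τ).continuousAt))
  rw [intervalIntegral.integral_eq_sub_of_hasDerivAt (fun τ _ => hF τ)
    (hcont.intervalIntegrable _ _), sub_self, zero_smul, exp_zero, one_mul, sub_zero]

theorem exp_smul_mul_exp_smul_sub_exp_smul_add (A B : 𝔸) (t : ℝ) :
    exp (t • A) * exp (t • B) - exp (t • (A + B)) =
      ∫ τ in (0 : ℝ)..t,
        exp ((t - τ) • (A + B)) * exp (τ • A) * (B - exp (-(τ • A)) * B * exp (τ • A)) *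
          exp (τ • B) := by
  have hV : ∀ τ : ℝ, HasDerivAt (fun σ : ℝ => exp (σ • A) * exp (σ • B))
      (A * exp (τ • A) * exp (τ • B) + exp (τ • A) * (B * exp (τ • B))) τ := fun τ =>
    (hasDerivAt_exp_smul_const' A τ).mul (hasDerivAt_exp_smul_const' B τ)
  have hV' : Continuous fun τ : ℝ =>
      A * exp (τ • A) * exp (τ • B) + exp (τ • A) * (B * exp (τ • B)) := by
    have hexp (X : 𝔸) : Continuous fun τ : ℝ => exp (τ • X) :=
      (differentiable_exp_smul_const ℝ X).continuous
    fun_prop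
  have duhamel := sub_exp_smul_mul_eq_integral (A + B) hV hV' t
  rw [zero_smul, zero_smul, exp_zero, one_mul, mul_one] at duhamel
  rw [duhamel]
  refine intervalIntegral.integral_congr fun τ _ => ?_
  have hinv := exp_mul_exp_neg (τ • A)
  simp only [mul_sub, sub_mul, add_mul, mul_add, mul_assoc, ← mul_assoc (exp (τ • A)) (exp _), hinv,
    one_mul]
  abel

end BanachAlgebra

/-- Explicit Trotter error: for operators `A, B` on a finite-dimensional space and `t ∈ ℝ`,
`e^{tA} e^{tB} − e^{t(A+B)} = ∫₀ᵗ e^{(t−τ)(A+B)} e^{τA} (B − e^{−τA} B e^{τA}) e^{τB} dτ`. -/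
theorem stmt9 {E : Type*} [NormedAddCommGroup E] [NormedSpace ℂ E] [FiniteDimensional ℂ E]
    (A B : E →L[ℂ] E) (t : ℝ) :
    NormedSpace.exp (t • A) * NormedSpace.exp (t • B) - NormedSpace.exp (t • (A + B)) =
      ∫ τ in (0 : ℝ)..t,
        NormedSpace.exp ((t - τ) • (A + B)) * NormedSpace.exp (τ • A) *
          (B - NormedSpace.exp (-(τ • A)) * B * NormedSpace.exp (τ • A)) *
          NormedSpace.exp (τ • B) :=
  exp_smul_mul_exp_smul_sub_exp_smul_add A B t
end

section
/- Let S be an anti-Hermitian operator and H any operator on a finite-dimensional Hilbert space. For k ≥ 0, define r_k(H) = ‖e^S H e^{−S} − Σ_{p=0}^{k−1} (1/p!) ad_S^p(H)‖ (with the sum empty for k = 0). Then r_k(H) ≤ (1/k!) ‖ad_S^k(H)‖, where ad_S(X) = [S, X]. -/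
/-!
Along `t ↦ e^{tS} X e^{-tS}` the `p`-th derivative is `e^{tS} ad_S^p(X) e^{-tS}`, whose norm is
`‖ad_S^p(X)‖` for every `t` because `e^{tS}` is unitary. The bound is then Taylor's theorem at
`t = 1`, with the remainder controlled by induction on `k` through the mean value inequality
(the remainder of order `k + 1` vanishes at `0` and its derivative is a remainder of order `k`).
-/

open NormedSpace Set Finset
open scoped Nat

theorem hasDerivAt_pow_succ_div_factorial_succ (n : ℕ) (t : ℝ) :
    HasDerivAt (fun s : ℝ => s ^ (n + 1) / (n + 1)!) (t ^ n / n !) t := by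
  refine ((hasDerivAt_pow (n + 1) t).div_const ((n + 1)! : ℝ)).congr_deriv ?_
  rw [Nat.factorial_succ, Nat.cast_mul, Nat.add_sub_cancel]
  field_simp

section Taylor

variable {F : Type*} [NormedAddCommGroup F] [NormedSpace ℝ F]

theorem hasDerivAt_sum_pow_div_factorial_smul (v : ℕ → F) (k : ℕ) (t : ℝ) :
    HasDerivAt (fun s : ℝ => ∑ p ∈ range (k + 1), (s ^ p / p !) • v p)
      (∑ p ∈ range k, (t ^ p / p !) • v (p + 1)) t := by
  simp_rw [sum_range_succ' _ k]
  simp only [pow_zero, Nat.factorial_zero, Nat.cast_one, div_one, one_smul]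
  refine (HasDerivAt.fun_sum fun p _ => ?_).add_const (v 0)
  exact (hasDerivAt_pow_succ_div_factorial_succ p t).smul_const (v (p + 1))

theorem norm_sub_sum_pow_div_factorial_smul_le (u : ℕ → ℝ → F)
    (hu : ∀ p t, HasDerivAt (u p) (u (p + 1) t) t) (k : ℕ) {x C : ℝ} (hx : 0 ≤ x)
    (hC : ∀ s ∈ Icc 0 x, ‖u k s‖ ≤ C) :
    ‖u 0 x - ∑ p ∈ range k, (x ^ p / p !) • u p 0‖ ≤ C * x ^ k / k ! := by
  induction k generalizing u x with
  | zero => simpa using hC x ⟨hx, le_rfl⟩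
  | succ k ih =>
    have hR : ∀ t, HasDerivAt (fun s => u 0 s - ∑ p ∈ range (k + 1), (s ^ p / p !) • u p 0)
        (u 1 t - ∑ p ∈ range k, (t ^ p / p !) • u (p + 1) 0) t := fun t =>
      (hu 0 t).sub (hasDerivAt_sum_pow_div_factorial_smul (fun p => u p 0) k t)
    have hB : ∀ t, HasDerivAt (fun s => C * s ^ (k + 1) / (k + 1)!) (C * t ^ k / k !) t :=
      fun t => by
        simpa only [mul_div_assoc] using (hasDerivAt_pow_succ_div_factorial_succ k t).const_mul C
    refine image_norm_le_of_norm_deriv_right_le_deriv_boundary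
      (fun t _ => (hR t).continuousAt.continuousWithinAt) (fun t _ => (hR t).hasDerivWithinAt)
      ?_ hB (fun t ht => ?_) ⟨hx, le_rfl⟩
    · simp [sum_range_succ']
    · exact ih (fun p => u (p + 1)) (fun p => hu (p + 1)) ht.1
        fun s hs => hC s ⟨hs.1, hs.2.trans ht.2.le⟩

end Taylor

theorem hasDerivAt_exp_smul_mul_mul_exp_smul_neg {𝕂 𝔸 : Type*} [RCLike 𝕂] [NormedRing 𝔸]
    [NormedAlgebra 𝕂 𝔸] [CompleteSpace 𝔸] (S X : 𝔸) (t : 𝕂) :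
    HasDerivAt (fun s : 𝕂 => exp (s • S) * X * exp (s • -S))
      (exp (t • S) * (S * X - X * S) * exp (t • -S)) t :=
  (((hasDerivAt_exp_smul_const S t).mul_const X).mul
    (hasDerivAt_exp_smul_const' (-S) t)).congr_deriv (by noncomm_ring)

section CStarAlgebra

variable {A : Type*} [CStarAlgebra A]

theorem exp_smul_mem_unitary_of_star_eq_neg {S : A} (hS : star S = -S) (t : ℝ) :
    exp (t • S) ∈ unitary A := by
  let +nondep : NormedAlgebra ℚ A := .restrictScalars ℚ ℂ A
  refine exp_mem_unitary_of_mem_skewAdjoint (skewAdjoint.mem_iff.mpr ?_)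
  rw [star_smul, hS, star_trivial, smul_neg]

theorem norm_exp_smul_mul_mul_exp_smul_neg {S : A} (hS : star S = -S) (X : A) (t : ℝ) :
    ‖exp (t • S) * X * exp (t • -S)‖ = ‖X‖ := by
  have hS' : star (-S) = - -S := by rw [star_neg, hS]
  rw [CStarRing.norm_mul_mem_unitary _ (exp_smul_mem_unitary_of_star_eq_neg hS' t),
    CStarRing.norm_mem_unitary_mul _ (exp_smul_mem_unitary_of_star_eq_neg hS t)]

theorem norm_exp_mul_mul_exp_neg_sub_sum_le {S : A} (hS : star S = -S) (X : A) (k : ℕ) :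
    ‖exp S * X * exp (-S) - ∑ p ∈ range k, (p ! : ℝ)⁻¹ • (fun Y => S * Y - Y * S)^[p] X‖ ≤
      (k ! : ℝ)⁻¹ * ‖(fun Y => S * Y - Y * S)^[k] X‖ := by
  set ad := fun Y => S * Y - Y * S
  have hu : ∀ p t, HasDerivAt (fun s : ℝ => exp (s • S) * ad^[p] X * exp (s • -S))
      (exp (t • S) * ad^[p + 1] X * exp (t • -S)) t := fun p t => by
    rw [Function.iterate_succ_apply']
    exact hasDerivAt_exp_smul_mul_mul_exp_smul_neg S _ t
  have h := norm_sub_sum_pow_div_factorial_smul_le _ hu k zero_le_one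
    fun s _ => (norm_exp_smul_mul_mul_exp_smul_neg hS _ s).le
  simpa [inv_mul_eq_div] using h

end CStarAlgebra

/-- For `S` anti-Hermitian and any operator `H` on a finite-dimensional Hilbert space, the
truncation error of the adjoint-series expansion of `e^S H e^{−S}` satisfies
`‖e^S H e^{−S} − Σ_{p<k} (1/p!) ad_S^p(H)‖ ≤ (1/k!) ‖ad_S^k(H)‖`. -/
theorem stmt10 {E : Type*} [NormedAddCommGroup E] [InnerProductSpace ℂ E]
    [FiniteDimensional ℂ E] (S H : E →L[ℂ] E) (hS : S.adjoint = -S) (k : ℕ) :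
    ‖NormedSpace.exp S * H * NormedSpace.exp (-S) -
        ∑ p ∈ Finset.range k, ((p.factorial : ℝ)⁻¹) • (fun X => S * X - X * S)^[p] H‖ ≤
      (k.factorial : ℝ)⁻¹ * ‖(fun X => S * X - X * S)^[k] H‖ :=
  norm_exp_mul_mul_exp_neg_sub_sum_le hS H k
end

section
/- With E_obs(M) = V(M ⊗ P)V† and E_state(ρ) = V(ρ ⊗ τ)V† as above (V isometry, P projector with Pτ = τP = τ), for every Hermitian H on H, every density matrix ρ, and all t ∈ ℝ: e^{−i E_obs(H) t} E_state(ρ) e^{i E_obs(H) t} = E_state(e^{−iHt} ρ e^{iHt}). -/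
/-!
Write `K = V (H ⊗ P) V†` and `Φ M = V (M ⊗ τ) V†`. Since `V† V = 1` and `P τ = τ = τ P`,
`K Φ M = Φ (H M)` and `Φ M K = Φ (M H)`: the encoded Hamiltonian intertwines with `Φ` on both
sides. Intertwining passes to powers and, `Φ` being continuous and additive, to the exponential
series, so `e^{-iKt} Φ ρ e^{iKt} = Φ (e^{-iHt} ρ e^{iHt})`.
-/

open scoped Kronecker ComplexOrder
open NormedSpace

theorem pow_mul_map_eq_map_pow_mul {R S : Type*} [Semiring R] [Semiring S] (Φ : R →+ S)
    {a : S} {b : R} (h : ∀ x, a * Φ x = Φ (b * x)) (n : ℕ) (x : R) :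
    a ^ n * Φ x = Φ (b ^ n * x) := by
  induction n with
  | zero => simp
  | succ n ih => rw [pow_succ', mul_assoc, ih, h, pow_succ', mul_assoc]

section IntertwiningExp

variable {R S : Type*} [NormedRing R] [NormedAlgebra ℚ R] [CompleteSpace R]
  [NormedRing S] [NormedAlgebra ℚ S] [CompleteSpace S]

theorem exp_mul_map_eq_map_exp_mul (Φ : R →+ S) (hΦ : Continuous Φ) {a : S} {b : R}
    (h : ∀ x, a * Φ x = Φ (b * x)) (x : R) : exp a * Φ x = Φ (exp b * x) := by
  rw [exp_eq_tsum_rat, exp_eq_tsum_rat, ← (expSeries_summable' a).tsum_mul_right,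
    ← (expSeries_summable' b).tsum_mul_right, ((expSeries_summable' b).mul_right x).map_tsum Φ hΦ]
  congr 1 with n
  rw [smul_mul_assoc, smul_mul_assoc, pow_mul_map_eq_map_pow_mul Φ h, map_rat_smul]

theorem map_mul_exp_eq_map_mul_exp (Φ : R →+ S) (hΦ : Continuous Φ) {a : S} {b : R}
    (h : ∀ x, Φ x * a = Φ (x * b)) (x : R) : Φ x * exp a = Φ (x * exp b) := by
  let Ψ : Rᵐᵒᵖ →+ Sᵐᵒᵖ := (MulOpposite.opAddEquiv.toAddMonoidHom.comp Φ).comp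
    MulOpposite.opAddEquiv.symm.toAddMonoidHom
  have hΨ : Continuous Ψ := MulOpposite.continuous_op.comp (hΦ.comp MulOpposite.continuous_unop)
  have := exp_mul_map_eq_map_exp_mul Ψ hΨ (a := MulOpposite.op a) (b := MulOpposite.op b)
    (fun x => MulOpposite.unop_injective (h x.unop)) (MulOpposite.op x)
  rw [exp_op, exp_op] at this
  exact congrArg MulOpposite.unop this

end IntertwiningExp

namespace Matrix

variable {𝕜 l m n : Type*} [CommRing 𝕜] [Fintype l] [Fintype m] [Fintype n]
  [DecidableEq m] [DecidableEq n]

theorem mul_kronecker_mul_of_mul_eq_one {V : Matrix l (m × n) 𝕜} {W : Matrix (m × n) l 𝕜}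
    (hWV : W * V = 1) (A B : Matrix m m 𝕜) (P Q : Matrix n n 𝕜) :
    V * (A ⊗ₖ P) * W * (V * (B ⊗ₖ Q) * W) = V * ((A * B) ⊗ₖ (P * Q)) * W := by
  simp only [Matrix.mul_assoc]
  rw [← Matrix.mul_assoc W, hWV, Matrix.one_mul, ← Matrix.mul_assoc (A ⊗ₖ P),
    ← mul_kronecker_mul]

@[simps]
def kroneckerEncode (V : Matrix l (m × n) 𝕜) (W : Matrix (m × n) l 𝕜) (τ : Matrix n n 𝕜) :
    Matrix m m 𝕜 →ₗ[𝕜] Matrix l l 𝕜 where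
  toFun M := V * (M ⊗ₖ τ) * W
  map_add' M N := by simp only [add_kronecker, Matrix.mul_add, Matrix.add_mul]
  map_smul' s M := by
    simp only [smul_kronecker, Matrix.mul_smul, Matrix.smul_mul, RingHom.id_apply]

variable {V : Matrix l (m × n) 𝕜} {W : Matrix (m × n) l 𝕜} {P τ : Matrix n n 𝕜}

theorem smul_mul_kroneckerEncode (hWV : W * V = 1) (hPτ : P * τ = τ) (s : 𝕜)
    (A M : Matrix m m 𝕜) :
    s • (V * (A ⊗ₖ P) * W) * kroneckerEncode V W τ M = kroneckerEncode V W τ (s • A * M) := by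
  rw [smul_mul_assoc, smul_mul_assoc, map_smul, kroneckerEncode_apply, kroneckerEncode_apply,
    mul_kronecker_mul_of_mul_eq_one hWV, hPτ]

theorem kroneckerEncode_mul_smul (hWV : W * V = 1) (hτP : τ * P = τ) (s : 𝕜)
    (A M : Matrix m m 𝕜) :
    kroneckerEncode V W τ M * s • (V * (A ⊗ₖ P) * W) = kroneckerEncode V W τ (M * s • A) := by
  rw [mul_smul_comm, mul_smul_comm, map_smul, kroneckerEncode_apply, kroneckerEncode_apply,
    mul_kronecker_mul_of_mul_eq_one hWV, hτP]

end Matrix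

open Matrix in
theorem stmt13_general {a b c : ℕ} (V : Matrix (Fin c) (Fin a × Fin b) ℂ)
    (hV : V.conjTranspose * V = 1)
    (P : Matrix (Fin b) (Fin b) ℂ)
    (τ : Matrix (Fin b) (Fin b) ℂ)
    (hPτ : P * τ = τ) (hτP : τ * P = τ)
    (H : Matrix (Fin a) (Fin a) ℂ)
    (ρ : Matrix (Fin a) (Fin a) ℂ) (t : ℝ) :
    NormedSpace.exp ((-(Complex.I * t)) • (V * (H ⊗ₖ P) * V.conjTranspose)) *
        (V * (ρ ⊗ₖ τ) * V.conjTranspose) *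
        NormedSpace.exp ((Complex.I * t) • (V * (H ⊗ₖ P) * V.conjTranspose)) =
      V * ((NormedSpace.exp ((-(Complex.I * t)) • H) * ρ *
        NormedSpace.exp ((Complex.I * t) • H)) ⊗ₖ τ) * V.conjTranspose := by
  set Φ := kroneckerEncode V Vᴴ τ
  have hΦ : Continuous Φ := Φ.continuous_of_finiteDimensional
  -- any algebra norm on matrices serves: `exp` depends only on the topology
  open scoped Norms.Operator in
  calc _ = Φ (exp (-(Complex.I * t) • H) * ρ) * exp ((Complex.I * t) • (V * (H ⊗ₖ P) * Vᴴ)) :=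
        congrArg (· * _) <| exp_mul_map_eq_map_exp_mul Φ.toAddMonoidHom hΦ
          (smul_mul_kroneckerEncode hV hPτ _ H) ρ
    _ = _ := map_mul_exp_eq_map_mul_exp Φ.toAddMonoidHom hΦ (kroneckerEncode_mul_smul hV hτP _ H) _

/-- For a standard encoding `E_obs(M) = V(M ⊗ P)V†`, `E_state(ρ) = V(ρ ⊗ τ)V†` (with `V` an
isometry, `P` a nonzero projector, `τ` a density matrix with `Pτ = τP = τ`), time evolution is
consistent: `e^{−i E_obs(H) t} E_state(ρ) e^{i E_obs(H) t} = E_state(e^{−iHt} ρ e^{iHt})`. -/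
theorem stmt13 {a b c : ℕ} (V : Matrix (Fin c) (Fin a × Fin b) ℂ)
    (hV : V.conjTranspose * V = 1)
    (P : Matrix (Fin b) (Fin b) ℂ) (hPh : P.IsHermitian) (hPi : P * P = P) (hP0 : P ≠ 0)
    (τ : Matrix (Fin b) (Fin b) ℂ) (hτ : τ.PosSemidef) (hτtr : τ.trace = 1)
    (hPτ : P * τ = τ) (hτP : τ * P = τ)
    (H : Matrix (Fin a) (Fin a) ℂ) (hH : H.IsHermitian)
    (ρ : Matrix (Fin a) (Fin a) ℂ) (hρ : ρ.PosSemidef) (hρtr : ρ.trace = 1) (t : ℝ) :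
    NormedSpace.exp ((-(Complex.I * t)) • (V * (H ⊗ₖ P) * V.conjTranspose)) *
        (V * (ρ ⊗ₖ τ) * V.conjTranspose) *
        NormedSpace.exp ((Complex.I * t) • (V * (H ⊗ₖ P) * V.conjTranspose)) =
      V * ((NormedSpace.exp ((-(Complex.I * t)) • H) * ρ *
        NormedSpace.exp ((Complex.I * t) • H)) ⊗ₖ τ) * V.conjTranspose :=
  stmt13_general V hV P τ hPτ hτP H ρ t
end

section
/- Let H′ = H_I ⊗ I + H_X ⊗ X + H_{|1⟩⟨1|} ⊗ |1⟩⟨1| be a Hermitian operator on H ⊗ ℂ², where H_{|1⟩⟨1|}² = ω² I with ω = 2π/δt for some δt > 0. Then the sum Σ_{k≥2} ((−i δt)^k / k!) H_X H_{|1⟩⟨1|}^{k−2} H_X equals i δt ω^{−2} H_X H_{|1⟩⟨1|} H_X, and Σ_{k≥1} ((−i δt)^k / k!) H_{|1⟩⟨1|}^{k−1} H_X = 0. -/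
/-!
Since `H₁² = ω²`, every even power of `H₁` is a scalar `ω^{2m}` and every odd one is
`ω^{2m} H₁`, so splitting a power series in `H₁` into even and odd terms reduces it to the
scalar series of `cosh` and `sinh` at `w = -iδt ω = -2πi`, where `cosh w = 1` and `sinh w = 0`.
The two sums are `(e^{-iδt H₁} - 1) H₁⁻¹ = 0` and
`(e^{-iδt H₁} - 1 + iδt H₁) H₁⁻² = iδt H₁⁻¹ = iδt ω⁻² H₁`.
-/

open scoped Nat

section SquareScalar

variable {𝕜 A : Type*} [CommSemiring 𝕜] [Semiring A] [Algebra 𝕜 A] {a : A} {c : 𝕜}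

theorem pow_two_mul_of_mul_self_eq_smul_one (ha : a * a = c • 1) (m : ℕ) :
    a ^ (2 * m) = c ^ m • 1 := by
  rw [pow_mul, sq, ha, smul_pow, one_pow]

theorem pow_two_mul_add_one_of_mul_self_eq_smul_one (ha : a * a = c • 1) (m : ℕ) :
    a ^ (2 * m + 1) = c ^ m • a := by
  rw [pow_succ, pow_two_mul_of_mul_self_eq_smul_one ha, smul_one_mul]

theorem hasSum_smul_pow_of_mul_self_eq_smul_one [TopologicalSpace 𝕜] [TopologicalSpace A]
    [ContinuousAdd A] [ContinuousSMul 𝕜 A] (ha : a * a = c • 1) {f : ℕ → 𝕜} {s t : 𝕜}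
    (hs : HasSum (fun m ↦ f (2 * m) * c ^ m) s)
    (ht : HasSum (fun m ↦ f (2 * m + 1) * c ^ m) t) :
    HasSum (fun k ↦ f k • a ^ k) (s • 1 + t • a) := by
  refine HasSum.even_add_odd ?_ ?_
  · simpa only [pow_two_mul_of_mul_self_eq_smul_one ha, smul_smul] using hs.smul_const (1 : A)
  · simpa only [pow_two_mul_add_one_of_mul_self_eq_smul_one ha, smul_smul] using ht.smul_const a

end SquareScalar

namespace Complex

variable {z ω : ℂ}

theorem hasSum_sinh_mul_div (hω : ω ≠ 0) :
    HasSum (fun m ↦ z ^ (2 * m + 1) / (2 * m + 1)! * (ω ^ 2) ^ m) (sinh (z * ω) / ω) :=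
  ((hasSum_sinh (z * ω)).div_const ω).congr_fun fun m ↦ by
    field_simp
    ring

theorem hasSum_cosh_mul_sub_one_div_sq (hω : ω ≠ 0) :
    HasSum (fun m ↦ z ^ (2 * m + 2) / (2 * m + 2)! * (ω ^ 2) ^ m)
      ((cosh (z * ω) - 1) / ω ^ 2) := by
  have h := (hasSum_nat_add_iff' 1).mpr (hasSum_cosh (z * ω))
  rw [Finset.sum_range_one, mul_zero, pow_zero, Nat.factorial_zero, Nat.cast_one, div_one] at h
  refine (h.div_const (ω ^ 2)).congr_fun fun m ↦ ?_
  rw [show 2 * (m + 1) = 2 * m + 2 by ring]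
  field_simp
  ring

theorem hasSum_sinh_mul_sub_mul_div_cube (hω : ω ≠ 0) :
    HasSum (fun m ↦ z ^ (2 * m + 3) / (2 * m + 3)! * (ω ^ 2) ^ m)
      ((sinh (z * ω) - z * ω) / ω ^ 3) := by
  have h := (hasSum_nat_add_iff' 1).mpr (hasSum_sinh (z * ω))
  rw [Finset.sum_range_one, mul_zero, zero_add, pow_one, Nat.factorial_one, Nat.cast_one,
    div_one] at h
  refine (h.div_const (ω ^ 3)).congr_fun fun m ↦ ?_
  rw [show 2 * (m + 1) + 1 = 2 * m + 3 by ring]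
  field_simp
  ring

theorem cosh_eq_one_and_sinh_eq_zero_of_exp_eq_one {w : ℂ} (hw : exp w = 1) :
    cosh w = 1 ∧ sinh w = 0 := by
  have hadd := cosh_add_sinh w
  have hsub := cosh_sub_sinh w
  rw [hw] at hadd
  rw [exp_neg, hw, inv_one] at hsub
  exact ⟨by linear_combination (hadd + hsub) / 2, by linear_combination (hadd - hsub) / 2⟩

end Complex

section PeriodicExponential

open Complex

variable {A : Type*} [Ring A] [Algebra ℂ A] [TopologicalSpace A] [ContinuousAdd A]
  [ContinuousSMul ℂ A] {a : A} {z ω : ℂ}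

theorem hasSum_pow_succ_div_factorial_smul_pow_of_exp_eq_one (hω : ω ≠ 0)
    (ha : a * a = ω ^ 2 • 1) (hexp : exp (z * ω) = 1) :
    HasSum (fun k ↦ (z ^ (k + 1) / (k + 1)! : ℂ) • a ^ k) 0 := by
  obtain ⟨hcosh, hsinh⟩ := cosh_eq_one_and_sinh_eq_zero_of_exp_eq_one hexp
  have h : HasSum (fun k ↦ (z ^ (k + 1) / (k + 1)! : ℂ) • a ^ k)
      ((sinh (z * ω) / ω) • 1 + ((cosh (z * ω) - 1) / ω ^ 2) • a) :=
    hasSum_smul_pow_of_mul_self_eq_smul_one ha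
      (hasSum_sinh_mul_div hω) (hasSum_cosh_mul_sub_one_div_sq hω)
  rwa [hcosh, hsinh, sub_self, zero_div, zero_div, zero_smul, zero_smul, add_zero] at h

theorem hasSum_pow_add_two_div_factorial_smul_pow_of_exp_eq_one (hω : ω ≠ 0)
    (ha : a * a = ω ^ 2 • 1) (hexp : exp (z * ω) = 1) :
    HasSum (fun k ↦ (z ^ (k + 2) / (k + 2)! : ℂ) • a ^ k) ((-z / ω ^ 2) • a) := by
  obtain ⟨hcosh, hsinh⟩ := cosh_eq_one_and_sinh_eq_zero_of_exp_eq_one hexp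
  have h : HasSum (fun k ↦ (z ^ (k + 2) / (k + 2)! : ℂ) • a ^ k)
      (((cosh (z * ω) - 1) / ω ^ 2) • 1 + ((sinh (z * ω) - z * ω) / ω ^ 3) • a) :=
    hasSum_smul_pow_of_mul_self_eq_smul_one ha
      (hasSum_cosh_mul_sub_one_div_sq hω) (hasSum_sinh_mul_sub_mul_div_cube hω)
  rwa [hcosh, hsinh, sub_self, zero_div, zero_smul, zero_add, zero_sub,
    show -(z * ω) / ω ^ 3 = -z / ω ^ 2 by field_simp] at h

end PeriodicExponential

open scoped Real

theorem stmt16_general {E : Type*} [NormedAddCommGroup E] [InnerProductSpace ℂ E]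
    (HX H1 : E →L[ℂ] E) (δt ω : ℝ) (hδt : 0 < δt) (hω : ω = 2 * π / δt)
    (hsq : H1 * H1 = (ω ^ 2 : ℝ) • (1 : E →L[ℂ] E)) :
    (∑' k : ℕ, ((-(Complex.I * δt)) ^ (k + 2) / ((k + 2).factorial : ℂ)) •
        (HX * H1 ^ k * HX)) =
      ((Complex.I * δt) * ((ω : ℂ) ^ 2)⁻¹) • (HX * H1 * HX) ∧
    (∑' k : ℕ, ((-(Complex.I * δt)) ^ (k + 1) / ((k + 1).factorial : ℂ)) •
        (H1 ^ k * HX)) = 0 := by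
  have hω0 : (ω : ℂ) ≠ 0 := by
    rw [hω]
    exact_mod_cast (div_pos Real.two_pi_pos hδt).ne'
  have hH1 : H1 * H1 = (ω : ℂ) ^ 2 • 1 := by
    rw [hsq, ← Complex.coe_smul, Complex.ofReal_pow]
  have hexp : Complex.exp (-(Complex.I * δt) * ω) = 1 := by
    have hδ : (δt : ℂ) ≠ 0 := by exact_mod_cast hδt.ne'
    rw [show -(Complex.I * δt) * ω = -(2 * π * Complex.I) by rw [hω]; push_cast; field_simp,
      Complex.exp_neg, Complex.exp_two_pi_mul_I, inv_one]
  constructor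
  · have h := ((hasSum_pow_add_two_div_factorial_smul_pow_of_exp_eq_one hω0 hH1 hexp).mul_left
      HX).mul_right HX
    simp only [mul_smul_comm, smul_mul_assoc] at h
    rw [h.tsum_eq, neg_neg, div_eq_mul_inv]
  · simpa using ((hasSum_pow_succ_div_factorial_smul_pow_of_exp_eq_one hω0 hH1 hexp).mul_right
      HX).tsum_eq

/-- Series identities for the Zeno measurement gadget: if `H_{|1⟩⟨1|}² = ω² I` with
`ω = 2π/δt`, then `Σ_{k≥2} ((−iδt)^k/k!) H_X H_{|1⟩⟨1|}^{k−2} H_X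
 = iδt ω^{−2} H_X H_{|1⟩⟨1|} H_X` and `Σ_{k≥1} ((−iδt)^k/k!) H_{|1⟩⟨1|}^{k−1} H_X = 0`. -/
theorem stmt16 {E : Type*} [NormedAddCommGroup E] [InnerProductSpace ℂ E]
    [FiniteDimensional ℂ E] (HI HX H1 : E →L[ℂ] E)
    (hHI : IsSelfAdjoint HI) (hHX : IsSelfAdjoint HX) (hH1 : IsSelfAdjoint H1)
    (δt ω : ℝ) (hδt : 0 < δt) (hω : ω = 2 * π / δt)
    (hsq : H1 * H1 = (ω ^ 2 : ℝ) • (1 : E →L[ℂ] E)) :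
    (∑' k : ℕ, ((-(Complex.I * δt)) ^ (k + 2) / ((k + 2).factorial : ℂ)) •
        (HX * H1 ^ k * HX)) =
      ((Complex.I * δt) * ((ω : ℂ) ^ 2)⁻¹) • (HX * H1 * HX) ∧
    (∑' k : ℕ, ((-(Complex.I * δt)) ^ (k + 1) / ((k + 1).factorial : ℂ)) •
        (H1 ^ k * HX)) = 0 :=
  stmt16_general HX H1 δt ω hδt hω hsq
end

section
/- Let H = A ⊗ B ⊗ C on (ℂ²)^{⊗3} with A, B, C Hermitian, each diagonal in the computational basis with eigenvalues λ₀^A, λ₁^A (etc.). Define H′ on (ℂ²)^{⊗4} by H′ = λ₀^B (A − λ₀^A I) ⊗ I ⊗ I ⊗ C + λ₁^B I ⊗ (A − λ₀^A I) ⊗ I ⊗ C + λ₀^A I ⊗ I ⊗ B ⊗ C, and let P′ = (I ⊗ |0⟩⟨0| ⊗ |0⟩⟨0| + |0⟩⟨0| ⊗ I ⊗ |1⟩⟨1|) ⊗ I. Then P′ is an orthogonal projector of rank 8, P′ commutes with H′, and the spectrum of P′H′P′ restricted to ran P′ equals the spectrum of H with the same multiplicities. -/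
open scoped Kronecker

private abbrev Idx8 := (Fin 2 × Fin 2) × Fin 2
private abbrev Idx16 := ((Fin 2 × Fin 2) × Fin 2) × Fin 2

private def gf : Idx8 → Idx16 :=
  fun r => if r.1.2 = 0 then (((r.1.1, 0), 0), r.2) else (((0, r.1.1), 1), r.2)

private noncomputable def Wm : Matrix Idx8 Idx16 ℂ :=
  Matrix.of fun r c => if c = gf r then (1:ℂ) else 0

private lemma gf_inj : Function.Injective gf := by decide

private def pNat : Idx16 → ℕ :=
  fun c => if (c.1.1.2 = 0 ∧ c.1.2 = 0) ∨ (c.1.1.1 = 0 ∧ c.1.2 = 1) then 1 else 0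

private lemma hWTW : ∀ c c' : Idx16,
    (∑ r : Idx8, (if c = gf r then (1:ℕ) else 0) * (if c' = gf r then 1 else 0)) =
      if c = c' then pNat c else 0 := by decide

private lemma diag4 (a b c d : Fin 2 → ℂ) :
    Matrix.diagonal a ⊗ₖ Matrix.diagonal b ⊗ₖ Matrix.diagonal c ⊗ₖ Matrix.diagonal d =
      Matrix.diagonal (fun x : Idx16 => a x.1.1.1 * b x.1.1.2 * c x.1.2 * d x.2) := by
  rw [Matrix.diagonal_kronecker_diagonal, Matrix.diagonal_kronecker_diagonal,
    Matrix.diagonal_kronecker_diagonal]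

private lemma diag3 (a b c : Fin 2 → ℂ) :
    Matrix.diagonal a ⊗ₖ Matrix.diagonal b ⊗ₖ Matrix.diagonal c =
      Matrix.diagonal (fun x : Idx8 => a x.1.1 * b x.1.2 * c x.2) := by
  rw [Matrix.diagonal_kronecker_diagonal, Matrix.diagonal_kronecker_diagonal]

private lemma sandwich (d : Idx16 → ℂ) :
    Wm * Matrix.diagonal d * Wm.conjTranspose = Matrix.diagonal fun r => d (gf r) := by
  ext r r'
  simp [Wm, Matrix.mul_apply, Matrix.conjTranspose_apply, Matrix.diagonal_apply,
    ite_mul, mul_ite, apply_ite (star : ℂ → ℂ), Finset.sum_ite_eq, Finset.sum_ite_eq',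
    gf_inj.eq_iff, eq_comm]
  split <;> simp_all

private lemma wwt : Wm * Wm.conjTranspose = 1 := by
  ext r r'
  simp [Wm, Matrix.mul_apply, Matrix.conjTranspose_apply, Matrix.one_apply,
    ite_mul, mul_ite, apply_ite (star : ℂ → ℂ), Finset.sum_ite_eq, Finset.sum_ite_eq',
    gf_inj.eq_iff]
  split <;> simp_all [eq_comm]

private lemma wtw : Wm.conjTranspose * Wm = Matrix.diagonal fun c => (pNat c : ℂ) := by
  ext c c'
  have h := congrArg (Nat.cast : ℕ → ℂ) (hWTW c c')
  push_cast at h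
  simpa [Wm, Matrix.mul_apply, Matrix.conjTranspose_apply, Matrix.diagonal_apply,
    apply_ite (star : ℂ → ℂ)] using h

private lemma diagonal_congr {n α : Type*} [DecidableEq n] [Zero α] {d1 d2 : n → α}
    (h : ∀ i, d1 i = d2 i) : Matrix.diagonal d1 = Matrix.diagonal d2 := by
  rw [show d1 = d2 from funext h]

private lemma std0 : Matrix.single (0 : Fin 2) (0 : Fin 2) (1 : ℂ) =
    Matrix.diagonal (fun i => if i = 0 then 1 else 0) := by
  ext i j; fin_cases i <;> fin_cases j <;> simp [Matrix.single]

private lemma std1 : Matrix.single (1 : Fin 2) (1 : Fin 2) (1 : ℂ) =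
    Matrix.diagonal (fun i => if i = 1 then 1 else 0) := by
  ext i j; fin_cases i <;> fin_cases j <;> simp [Matrix.single]

/-- The "exact" 3-to-2 gadget: for `H = A ⊗ B ⊗ C` with `A, B, C` diagonal qubit observables,
the 2-local `H′` on four qubits together with the projector `P′` satisfy: `P′` is an orthogonal
projector commuting with `H′`, and the restriction of `H′` to the range of `P′` is unitarily
equivalent to `H` (so `P′H′P′` exactly reproduces the spectrum of `H` with multiplicities). -/
theorem stmt17 (lA lB lC : Fin 2 → ℝ)
    (A B C : Matrix (Fin 2) (Fin 2) ℂ)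
    (hA : A = Matrix.diagonal fun i => (lA i : ℂ))
    (hB : B = Matrix.diagonal fun i => (lB i : ℂ))
    (hC : C = Matrix.diagonal fun i => (lC i : ℂ))
    (H : Matrix ((Fin 2 × Fin 2) × Fin 2) ((Fin 2 × Fin 2) × Fin 2) ℂ)
    (hH : H = A ⊗ₖ B ⊗ₖ C)
    (H' P' : Matrix (((Fin 2 × Fin 2) × Fin 2) × Fin 2)
      (((Fin 2 × Fin 2) × Fin 2) × Fin 2) ℂ)
    (hH' : H' = (lB 0 : ℂ) • ((A - (lA 0 : ℂ) • 1) ⊗ₖ (1 : Matrix (Fin 2) (Fin 2) ℂ) ⊗ₖ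
          (1 : Matrix (Fin 2) (Fin 2) ℂ) ⊗ₖ C) +
        (lB 1 : ℂ) • ((1 : Matrix (Fin 2) (Fin 2) ℂ) ⊗ₖ (A - (lA 0 : ℂ) • 1) ⊗ₖ
          (1 : Matrix (Fin 2) (Fin 2) ℂ) ⊗ₖ C) +
        (lA 0 : ℂ) • ((1 : Matrix (Fin 2) (Fin 2) ℂ) ⊗ₖ (1 : Matrix (Fin 2) (Fin 2) ℂ) ⊗ₖ
          B ⊗ₖ C))
    (hP' : P' = ((1 : Matrix (Fin 2) (Fin 2) ℂ) ⊗ₖ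
          Matrix.single (0 : Fin 2) (0 : Fin 2) (1 : ℂ) ⊗ₖ
          Matrix.single (0 : Fin 2) (0 : Fin 2) (1 : ℂ) +
        Matrix.single (0 : Fin 2) (0 : Fin 2) (1 : ℂ) ⊗ₖ
          (1 : Matrix (Fin 2) (Fin 2) ℂ) ⊗ₖ
          Matrix.single (1 : Fin 2) (1 : Fin 2) (1 : ℂ)) ⊗ₖ
        (1 : Matrix (Fin 2) (Fin 2) ℂ)) :
    P'.IsHermitian ∧ P' * P' = P' ∧ P' * H' = H' * P' ∧
      ∃ W : Matrix ((Fin 2 × Fin 2) × Fin 2) (((Fin 2 × Fin 2) × Fin 2) × Fin 2) ℂ,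
        W * W.conjTranspose = 1 ∧ W.conjTranspose * W = P' ∧
        W * H' * W.conjTranspose = H := by
  have hA' : A - (lA 0 : ℂ) • 1 = Matrix.diagonal (fun i => (lA i : ℂ) - lA 0) := by
    subst hA
    rw [← Matrix.diagonal_one, ← Matrix.diagonal_smul]
    have h2 : ((lA 0 : ℂ) • fun _ : Fin 2 => (1:ℂ)) = fun i : Fin 2 => (lA 0 : ℂ) := by
      funext i; simp
    rw [h2, Matrix.diagonal_sub]
  -- diagonal form of P'
  have hP'd : P' = Matrix.diagonal fun c : Idx16 => (pNat c : ℂ) := by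
    rw [hP', std0, std1, ← Matrix.diagonal_one, diag3, diag3,
      Matrix.diagonal_add, Matrix.diagonal_kronecker_diagonal]
    refine diagonal_congr fun c => ?_
    obtain ⟨⟨⟨i, j⟩, k⟩, l⟩ := c
    fin_cases i <;> fin_cases j <;> fin_cases k <;> simp [pNat]
  -- diagonal form of H'
  have hH'd : H' = Matrix.diagonal fun c : Idx16 =>
      (lB 0 : ℂ) * ((lA c.1.1.1 : ℂ) - lA 0) * (lC c.2 : ℂ) +
      (lB 1 : ℂ) * ((lA c.1.1.2 : ℂ) - lA 0) * (lC c.2 : ℂ) +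
      (lA 0 : ℂ) * (lB c.1.2 : ℂ) * (lC c.2 : ℂ) := by
    rw [hH', hA', hB, hC, ← Matrix.diagonal_one, diag4, diag4, diag4,
      ← Matrix.diagonal_smul, ← Matrix.diagonal_smul, ← Matrix.diagonal_smul,
      Matrix.diagonal_add, Matrix.diagonal_add]
    refine diagonal_congr fun c => ?_
    simp only [Pi.add_apply, Pi.smul_apply, smul_eq_mul]
    ring
  have hHd : H = Matrix.diagonal fun r : Idx8 =>
      (lA r.1.1 : ℂ) * (lB r.1.2 : ℂ) * (lC r.2 : ℂ) := by
    rw [hH, hA, hB, hC, diag3]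
  refine ⟨?_, ?_, ?_, Wm, wwt, ?_, ?_⟩
  · rw [hP'd]
    unfold Matrix.IsHermitian
    rw [Matrix.diagonal_conjTranspose]
    exact diagonal_congr fun c => by simp [Pi.star_apply]
  · rw [hP'd, Matrix.diagonal_mul_diagonal]
    refine diagonal_congr fun c => ?_
    simp only [Pi.mul_apply, pNat]
    split <;> norm_num
  · rw [hP'd, hH'd, Matrix.diagonal_mul_diagonal, Matrix.diagonal_mul_diagonal]
    refine diagonal_congr fun c => ?_
    ring
  · rw [hP'd]; exact wtw
  · rw [hH'd, sandwich, hHd]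
    refine diagonal_congr fun r => ?_
    obtain ⟨⟨a, b⟩, c⟩ := r
    fin_cases b <;> simp [gf] <;> ring
end
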